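/- Let a and b be coprime natural numbers and t a natural number such that t divides a²+1, with gcd(b,t)=1. Let a* be an integer with a·a* ≡ 1 (mod b) and b* an integer with b·b* ≡ 1 (mod a). If b ≡ a (mod t), then S(t·a*, b) + S(t·b*, a) = (a² + b² + t²)/(t·a·b) − t − 2/t. -/

import Mathlib

open Finset

/-- The sawtooth function `((x))`: `x - ⌊x⌋ - 1/2` if `x ∉ ℤ`, and `0` if `x ∈ ℤ`. -/
noncomputable def saw (x : ℝ) : ℝ := if Int.fract x = 0 then 0 else x - ⌊x⌋ - 1/2

/-- The classical Dedekind sum `s(a,b) = ∑_{k=1}^b ((k/b)) ((a k / b))`. -/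
noncomputable def dedekindSum (a : ℤ) (b : ℕ) : ℝ :=
  ∑ k ∈ Finset.Icc 1 b, saw ((k : ℝ) / b) * saw ((a : ℝ) * k / b)

/-- The normalized Dedekind sum `S(a,b) = 12 s(a,b)`. -/
noncomputable def S (a : ℤ) (b : ℕ) : ℝ := 12 * dedekindSum a b

namespace DedAux

/- ### saw lemmas -/

lemma saw_intCast (n : ℤ) : saw (n : ℝ) = 0 := by
  simp [saw, Int.fract_intCast]

lemma saw_add_int (x : ℝ) (n : ℤ) : saw (x + n) = saw x := by
  unfold saw
  rw [Int.fract_add_intCast]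
  rcases eq_or_ne (Int.fract x) 0 with h | h
  · simp [h]
  · rw [if_neg h, if_neg h, Int.floor_add_intCast]
    push_cast
    ring

lemma saw_sub_int (x : ℝ) (n : ℤ) : saw (x - n) = saw x := by
  have := saw_add_int (x - n) n
  simpa using this.symm

lemma floor_cast_div (n : ℤ) (d : ℕ) : ⌊(n : ℝ) / (d : ℝ)⌋ = n / (d : ℤ) := by
  rw [show ((n:ℝ)/(d:ℝ)) = ((((n : ℚ)/(d : ℚ)) : ℚ) : ℝ) by push_cast; ring,
    Rat.floor_cast, Rat.floor_intCast_div_natCast]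

lemma saw_rat (m : ℤ) (v : ℕ) (hv : 0 < v) (hm : ¬ ((v:ℤ) ∣ m)) :
    saw ((m : ℝ) / (v : ℝ)) = ((m % (v:ℤ) : ℤ) : ℝ) / (v : ℝ) - 1/2 := by
  have hv' : (v : ℝ) ≠ 0 := by positivity
  have hfr : Int.fract ((m : ℝ) / (v : ℝ)) ≠ 0 := by
    intro h
    rw [Int.fract, sub_eq_zero] at h
    apply hm
    refine ⟨⌊(m : ℝ) / (v : ℝ)⌋, ?_⟩
    have : (m : ℝ) = (v : ℝ) * (⌊(m : ℝ) / (v : ℝ)⌋ : ℝ) := by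
      field_simp at h ⊢
      linarith [h]
    exact_mod_cast this
  rw [saw, if_neg hfr, floor_cast_div, Int.emod_def]
  push_cast
  field_simp
  try ring

/- ### sum over range vs Icc -/

lemma sum_range_eq_Icc {M : Type*} [AddCommMonoid M] (f : ℕ → M) (v : ℕ) (hv : 0 < v)
    (h0 : f 0 = 0) : ∑ k ∈ range v, f k = ∑ k ∈ Icc 1 (v-1), f k := by
  have h1 : range v = Ico 0 v := by rw [Finset.range_eq_Ico]
  have h2 : Icc 1 (v-1) = Ico 1 v := by
    rw [← Finset.Ico_add_one_right_eq_Icc]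
    congr 1
    omega
  rw [h1, h2, Finset.sum_eq_sum_Ico_succ_bot hv, h0, zero_add]

/- ### permutation lemma -/

lemma perm_sum {M : Type*} [AddCommMonoid M] (f : ℕ → M) (u v : ℕ)
    (hu : Nat.Coprime u v) : ∑ k ∈ range v, f (u * k % v) = ∑ k ∈ range v, f k := by
  rcases Nat.lt_or_ge v 2 with hv | hv
  · interval_cases v <;> simp
  · obtain ⟨u', -, hu'⟩ := Nat.exists_mul_mod_eq_one_of_coprime hu (by omega)
    refine Finset.sum_nbij' (fun k => u * k % v) (fun k => u' * k % v) ?_ ?_ ?_ ?_ ?_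
    · intro k hk; exact Finset.mem_range.mpr (Nat.mod_lt _ (by omega))
    · intro k hk; exact Finset.mem_range.mpr (Nat.mod_lt _ (by omega))
    · intro k hk
      rw [Finset.mem_range] at hk
      have h1 : u' * (u * k % v) ≡ u' * u * k [MOD v] := by
        calc u' * (u * k % v) ≡ u' * (u * k) [MOD v] := (Nat.mod_modEq (u*k) v).mul_left u'
        _ = u' * u * k := by ring
      have h2 : u' * u * k ≡ k [MOD v] := by
        have h3 : u * u' ≡ 1 [MOD v] := by
          show u * u' % v = 1 % v
          rw [hu', Nat.mod_eq_of_lt (by omega)]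
        calc u' * u * k = (u * u') * k := by ring
        _ ≡ 1 * k [MOD v] := h3.mul_right k
        _ = k := by ring
      have h4 := h1.trans h2
      unfold Nat.ModEq at h4
      rw [Nat.mod_eq_of_lt hk] at h4
      exact h4
    · intro k hk
      rw [Finset.mem_range] at hk
      have h1 : u * (u' * k % v) ≡ u * u' * k [MOD v] := by
        calc u * (u' * k % v) ≡ u * (u' * k) [MOD v] := (Nat.mod_modEq (u'*k) v).mul_left u
        _ = u * u' * k := by ring
      have h2 : u * u' * k ≡ k [MOD v] := by
        have h3 : u * u' ≡ 1 [MOD v] := by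
          show u * u' % v = 1 % v
          rw [hu', Nat.mod_eq_of_lt (by omega)]
        calc u * u' * k = (u * u') * k := by ring
        _ ≡ 1 * k [MOD v] := h3.mul_right k
        _ = k := by ring
      have h4 := h1.trans h2
      unfold Nat.ModEq at h4
      rw [Nat.mod_eq_of_lt hk] at h4
      exact h4
    · intro k hk; rfl

/- ### integer sums -/

def Q (v : ℕ) : ℤ := ∑ k ∈ range v, (k : ℤ)
def P (v : ℕ) : ℤ := ∑ k ∈ range v, (k : ℤ)^2
def A (u v : ℕ) : ℤ := ∑ k ∈ range v, (k : ℤ) * ((u * k / v : ℕ) : ℤ)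
def C (u v : ℕ) : ℤ := ∑ k ∈ range v, ((u * k / v : ℕ) : ℤ)^2
def B (u v : ℕ) : ℤ := ∑ k ∈ range v, ((u * k / v : ℕ) : ℤ)
def Fc (v x y : ℕ) : ℤ := ∑ k ∈ range v, ((x * k / v : ℕ) : ℤ) * ((y * k / v : ℕ) : ℤ)
def U (v x y : ℕ) : ℤ := ∑ k ∈ range v, ((x * k % v : ℕ) : ℤ) * ((y * k % v : ℕ) : ℤ)

lemma U_comm (v x y : ℕ) : U v x y = U v y x := by
  unfold U; exact Finset.sum_congr rfl fun k _ => mul_comm _ _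

lemma Qval (v : ℕ) : 2 * Q v = (v:ℤ)^2 - v := by
  induction v with
  | zero => simp [Q]
  | succ n ih => rw [Q, Finset.sum_range_succ, ← Q]; push_cast; push_cast at ih; ring_nf; ring_nf at ih; omega

lemma P6 (v : ℕ) : 6 * P v = 2*(v:ℤ)^3 - 3*(v:ℤ)^2 + v := by
  induction v with
  | zero => simp [P]
  | succ n ih => rw [P, Finset.sum_range_succ, ← P]; push_cast; push_cast at ih; ring_nf; ring_nf at ih; omega

lemma perm_lin (u v : ℕ) (hu : Nat.Coprime u v) :
    ∑ k ∈ range v, ((u * k % v : ℕ) : ℤ) = Q v :=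
  perm_sum (fun k => (k : ℤ)) u v hu

lemma perm_sq (u v : ℕ) (hu : Nat.Coprime u v) :
    ∑ k ∈ range v, ((u * k % v : ℕ) : ℤ)^2 = P v :=
  perm_sum (fun k => (k : ℤ)^2) u v hu

lemma mod_expand (m v : ℕ) : ((m % v : ℕ) : ℤ) = (m : ℤ) - (v : ℤ) * ((m / v : ℕ) : ℤ) := by
  push_cast [Int.natCast_mod, Int.natCast_div]
  rw [Int.emod_def]

lemma EXP (v x y : ℕ) :
    U v x y = (x:ℤ)*y*(P v) - v*x*(A y v) - v*y*(A x v) + (v:ℤ)^2*(Fc v x y) := by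
  simp only [U, P, A, Fc, Finset.mul_sum, ← Finset.sum_add_distrib, ← Finset.sum_sub_distrib]
  refine Finset.sum_congr rfl fun k _ => ?_
  rw [mod_expand, mod_expand]
  push_cast
  ring

lemma sq_expand (u v : ℕ) :
    ∑ k ∈ range v, ((u * k % v : ℕ) : ℤ)^2
      = (u:ℤ)^2*(P v) - 2*(u:ℤ)*v*(A u v) + (v:ℤ)^2*(C u v) := by
  simp only [P, A, C, Finset.mul_sum, ← Finset.sum_add_distrib, ← Finset.sum_sub_distrib]
  refine Finset.sum_congr rfl fun k _ => ?_
  rw [mod_expand]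
  push_cast
  ring

lemma R1 (u v : ℕ) (hu : Nat.Coprime u v) :
    2*(u:ℤ)*v*(A u v) = ((u:ℤ)^2-1)*(P v) + (v:ℤ)^2*(C u v) := by
  have h1 := perm_sq u v hu
  have h2 := sq_expand u v
  linear_combination h2 - h1

lemma nodvd (u v k : ℕ) (hu : Nat.Coprime u v) (hk1 : 1 ≤ k) (hk2 : k < v) :
    ¬ ((v:ℤ) ∣ ((u*k : ℕ) : ℤ)) := by
  intro h
  have h' : v ∣ u * k := Int.ofNat_dvd.mp (by exact_mod_cast h)
  have hvk : v ∣ k := Nat.Coprime.dvd_of_dvd_mul_left hu.symm h'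
  have := Nat.le_of_dvd (by omega) hvk
  omega

lemma refl_div (u v k : ℕ) (hu0 : 0 < u) (hv : 0 < v) (hu : Nat.Coprime u v)
    (hk1 : 1 ≤ k) (hk2 : k < v) :
    ((u * (v - k) / v : ℕ) : ℤ) = (u:ℤ) - 1 - ((u * k / v : ℕ) : ℤ) := by
  have hvz : (0:ℤ) < (v:ℤ) := by exact_mod_cast hv
  set m : ℤ := ((u*k : ℕ) : ℤ) with hm
  set q : ℤ := m / (v:ℤ) with hq
  set r : ℤ := m % (v:ℤ) with hr
  have hqr : r + (v:ℤ) * q = m := Int.emod_add_mul_ediv m v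
  have hr0 : 0 ≤ r := Int.emod_nonneg m (by omega)
  have hrv : r < v := Int.emod_lt_of_pos m hvz
  have hrne : r ≠ 0 := by
    intro h0
    exact nodvd u v k hu hk1 hk2 (Int.dvd_of_emod_eq_zero (by rw [← hr, h0]))
  have hcast1 : ((u * (v - k) : ℕ) : ℤ) = (u:ℤ)*(v:ℤ) - m := by
    rw [hm]
    push_cast [Nat.cast_sub (le_of_lt hk2)]
    ring
  have hdiv : ((u:ℤ)*(v:ℤ) - m) / (v:ℤ) = (u:ℤ) - 1 - q := by
    have h5 := (Int.ediv_emod_unique (a := (u:ℤ)*(v:ℤ) - m) (b := (v:ℤ))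
      (q := (u:ℤ) - 1 - q) (r := (v:ℤ) - r) hvz).mpr
      ⟨by linear_combination -hqr, by omega, by omega⟩
    exact h5.1
  rw [Int.natCast_div, hcast1, hdiv, Int.natCast_div, ← hm, ← hq]

lemma Bval (u v : ℕ) (hu0 : 0 < u) (hv : 0 < v) (hu : Nat.Coprime u v) :
    2 * B u v = ((u:ℤ)-1) * ((v:ℤ)-1) := by
  have hB : B u v = ∑ k ∈ Icc 1 (v-1), ((u * k / v : ℕ) : ℤ) :=
    sum_range_eq_Icc _ v hv (by simp)
  have h2 : ∑ k ∈ Icc 1 (v-1), ((u * k / v : ℕ) : ℤ)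
      = ∑ k ∈ Icc 1 (v-1), ((u * (v - k) / v : ℕ) : ℤ) := by
    refine Finset.sum_nbij' (fun k => v - k) (fun k => v - k) ?_ ?_ ?_ ?_ ?_
    · intro k hk
      simp only [Finset.mem_Icc] at hk ⊢
      omega
    · intro k hk
      simp only [Finset.mem_Icc] at hk ⊢
      omega
    · intro k hk
      simp only [Finset.mem_Icc] at hk
      omega
    · intro k hk
      simp only [Finset.mem_Icc] at hk
      omega
    · intro k hk
      simp only [Finset.mem_Icc] at hk
      rw [show v - (v - k) = k by omega]
  have h3 : ∑ k ∈ Icc 1 (v-1), ((u * (v - k) / v : ℕ) : ℤ)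
      = ∑ k ∈ Icc 1 (v-1), ((u:ℤ) - 1 - ((u * k / v : ℕ) : ℤ)) := by
    refine Finset.sum_congr rfl fun k hk => ?_
    rw [Finset.mem_Icc] at hk
    exact refl_div u v k hu0 hv hu hk.1 (by omega)
  rw [Finset.sum_sub_distrib, Finset.sum_const, Nat.card_Icc] at h3
  have hcard : (((v - 1 + 1 - 1 : ℕ)) : ℤ) = (v:ℤ) - 1 := by omega
  rw [nsmul_eq_mul, hcard] at h3
  rw [hB]
  linear_combination h2 + h3

lemma div_bound (u v k : ℕ) (hu0 : 0 < u) (hv : 0 < v) (hk : k < v) : u*k/v < u := by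
  rw [Nat.div_lt_iff_lt_mul hv]
  calc u*k < u*v := by
        have := Nat.mul_lt_mul_left hu0 (b := k) (c := v)
        exact this.mpr hk
  _ = u*v := rfl

lemma no_tie (u v y k : ℕ) (hu : Nat.Coprime u v) (hy1 : 1 ≤ y) (hy2 : y ≤ u - 1)
    (hu0 : 0 < u) : v * y ≠ u * k := by
  intro he
  have hdv : u ∣ v * y := ⟨k, he⟩
  have : u ∣ y := Nat.Coprime.dvd_of_dvd_mul_left hu hdv
  have := Nat.le_of_dvd (by omega) this
  omega

lemma filter_lt (u v k : ℕ) (hu0 : 0 < u) (hv : 0 < v) (cop : Nat.Coprime u v) (hk : k < v) :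
    Finset.filter (fun y => v*y < u*k) (Icc 1 (u-1)) = Icc 1 (u*k/v) := by
  have hb := div_bound u v k hu0 hv hk
  ext y
  simp only [Finset.mem_filter, Finset.mem_Icc]
  constructor
  · rintro ⟨⟨h1, _⟩, hlt⟩
    refine ⟨h1, ?_⟩
    rw [Nat.le_div_iff_mul_le hv]
    calc y * v = v * y := mul_comm _ _
    _ ≤ u * k := le_of_lt hlt
  · rintro ⟨h1, h2⟩
    refine ⟨⟨h1, by omega⟩, ?_⟩
    have hle : y * v ≤ u * k := (Nat.le_div_iff_mul_le hv).mp h2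
    rw [mul_comm] at hle
    exact lt_of_le_of_ne hle (no_tie u v y k cop h1 (by omega) hu0)

lemma sumOdd (m : ℕ) : ∑ y ∈ Icc 1 m, (2*(y:ℤ) - 1) = (m:ℤ)^2 := by
  induction m with
  | zero => simp
  | succ n ih =>
    rw [Finset.sum_Icc_succ_top (by omega), ih]
    push_cast
    ring

lemma CROSS (u v : ℕ) (hu0 : 0 < u) (hv : 0 < v) (hu : Nat.Coprime u v) :
    C u v = ((v:ℤ)-1)*((u:ℤ)-1)^2 - 2 * A v u + B v u := by
  have hv0 : 0 < v := hv
  -- pointwise rewriting of the square as a sum of odd numbers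
  have point : ∀ k ∈ range v, ((u*k/v : ℕ):ℤ)^2
      = ∑ y ∈ Icc 1 (u-1), ite (v*y < u*k) (2*(y:ℤ)-1) 0 := by
    intro k hk
    rw [Finset.mem_range] at hk
    rw [← Finset.sum_filter, filter_lt u v k hu0 hv hu hk, sumOdd]
  have hC : C u v = ∑ y ∈ Icc 1 (u-1), ∑ k ∈ range v, ite (v*y < u*k) (2*(y:ℤ)-1) 0 := by
    rw [C, Finset.sum_congr rfl point, Finset.sum_comm]
  -- inner sum evaluation
  have inner : ∀ y ∈ Icc 1 (u-1), ∑ k ∈ range v, ite (v*y < u*k) (2*(y:ℤ)-1) 0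
      = (2*(y:ℤ)-1) * ((v:ℤ) - 1 - ((v*y/u : ℕ):ℤ)) := by
    intro y hy
    rw [Finset.mem_Icc] at hy
    set m' : ℕ := v*y/u with hm'
    have hmv : m' < v := div_bound v u y hv hu0 (by omega)
    have compl : ∀ k ∈ range v, (ite (v*y < u*k) (2*(y:ℤ)-1) 0)
        = (2*(y:ℤ)-1) - ite (k < m'+1) (2*(y:ℤ)-1) 0 := by
      intro k _
      by_cases hc : k < m' + 1
      · rw [if_neg, if_pos hc]
        · ring
        · intro hlt
          have h4 : k * u ≤ v * y := (Nat.le_div_iff_mul_le hu0).mp (by omega)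
          rw [mul_comm] at h4
          exact absurd h4 (not_le.mpr hlt)
      · rw [if_pos, if_neg hc]
        · ring
        · have h4 : ¬ (k ≤ m') := by omega
          have h5 : ¬ (k * u ≤ v * y) := fun h5 => h4 ((Nat.le_div_iff_mul_le hu0).mpr h5)
          have h6 := Nat.lt_of_not_le h5
          rw [mul_comm k u] at h6
          exact h6
    rw [Finset.sum_congr rfl compl, Finset.sum_sub_distrib, Finset.sum_const]
    have hfil : Finset.filter (fun k => k < m'+1) (range v) = range (m'+1) := by
      ext k
      simp only [Finset.mem_filter, Finset.mem_range]
      omega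
    rw [← Finset.sum_filter, hfil, Finset.sum_const, Finset.card_range]
    rw [nsmul_eq_mul, nsmul_eq_mul, Finset.card_range]
    push_cast
    ring
  rw [hC, Finset.sum_congr rfl inner]
  have hA : A v u = ∑ y ∈ Icc 1 (u-1), (y:ℤ) * ((v*y/u : ℕ):ℤ) :=
    sum_range_eq_Icc _ u hu0 (by simp)
  have hBB : B v u = ∑ y ∈ Icc 1 (u-1), ((v*y/u : ℕ):ℤ) :=
    sum_range_eq_Icc _ u hu0 (by simp)
  have expand : ∀ y ∈ Icc 1 (u-1), (2*(y:ℤ)-1) * ((v:ℤ) - 1 - ((v*y/u : ℕ):ℤ))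
      = ((v:ℤ)-1)*(2*(y:ℤ)-1) - (2*((y:ℤ)*((v*y/u:ℕ):ℤ)) - ((v*y/u:ℕ):ℤ)) :=
    fun y _ => by ring
  rw [Finset.sum_congr rfl expand, Finset.sum_sub_distrib, Finset.sum_sub_distrib,
    ← Finset.mul_sum, ← Finset.mul_sum, sumOdd, hA, hBB]
  rw [show (((u-1 : ℕ)):ℤ) = (u:ℤ)-1 by omega]
  ring

lemma ite_prod (P Q : Prop) [Decidable P] [Decidable Q] :
    (ite P (1:ℤ) 0) * (ite Q (1:ℤ) 0) = ite (P ∧ Q) 1 0 := by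
  by_cases hP : P <;> by_cases hQ : Q <;> simp [hP, hQ]

lemma floor_as_sum (aM bM k : ℕ) (ha0 : 0 < aM) (hb0 : 0 < bM) (cop : Nat.Coprime bM aM)
    (hk : k < aM) :
    ((bM*k/aM : ℕ):ℤ) = ∑ y ∈ Icc 1 (bM-1), ite (aM*y < bM*k) (1:ℤ) 0 := by
  rw [← Finset.sum_filter, filter_lt bM aM k hb0 ha0 cop hk, Finset.sum_const,
    nsmul_eq_mul, mul_one, Nat.card_Icc, Nat.add_sub_cancel]

lemma exactly_one (a b c k y z : ℕ) (ha : 0 < a) (hb : 0 < b) (hc : 0 < c)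
    (hab : Nat.Coprime a b) (hac : Nat.Coprime a c) (hbc : Nat.Coprime b c)
    (hk1 : 1 ≤ k) (hk2 : k ≤ a-1) (hy1 : 1 ≤ y) (hy2 : y ≤ b-1) (hz1 : 1 ≤ z) (hz2 : z ≤ c-1) :
    (ite (a*y < b*k ∧ a*z < c*k) (1:ℤ) 0) + (ite (b*z < c*y ∧ b*k < a*y) (1:ℤ) 0)
      + (ite (c*k < a*z ∧ c*y < b*z) (1:ℤ) 0) = 1 := by
  have i1 : a*y < b*k ↔ a*(c*y) < b*(c*k) := by
    rw [show a*(c*y) = c*(a*y) by ring, show b*(c*k) = c*(b*k) by ring]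
    exact (Nat.mul_lt_mul_left hc).symm
  have i2 : a*z < c*k ↔ a*(b*z) < b*(c*k) := by
    rw [show a*(b*z) = b*(a*z) by ring, show b*(c*k) = b*(c*k) from rfl]
    exact (Nat.mul_lt_mul_left hb).symm
  have i3 : b*z < c*y ↔ a*(b*z) < a*(c*y) := (Nat.mul_lt_mul_left ha).symm
  have i4 : b*k < a*y ↔ b*(c*k) < a*(c*y) := by
    rw [show b*(c*k) = c*(b*k) by ring, show a*(c*y) = c*(a*y) by ring]
    exact (Nat.mul_lt_mul_left hc).symm
  have i5 : c*k < a*z ↔ b*(c*k) < a*(b*z) := by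
    rw [show a*(b*z) = b*(a*z) by ring]
    exact (Nat.mul_lt_mul_left hb).symm
  have i6 : c*y < b*z ↔ a*(c*y) < a*(b*z) := (Nat.mul_lt_mul_left ha).symm
  have d1 : a*(c*y) ≠ b*(c*k) := by
    intro he
    have he' : c*(a*y) = c*(b*k) := by
      rw [show c*(a*y) = a*(c*y) by ring, he]; ring
    have he2 : a*y = b*k := Nat.eq_of_mul_eq_mul_left hc he'
    have hd : a ∣ b*k := ⟨y, he2.symm⟩
    have := Nat.le_of_dvd (by omega) (Nat.Coprime.dvd_of_dvd_mul_left hab hd)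
    omega
  have d2 : b*(c*k) ≠ a*(b*z) := by
    intro he
    have he' : b*(c*k) = b*(a*z) := by rw [he]; ring
    have he2 : c*k = a*z := Nat.eq_of_mul_eq_mul_left hb he'
    have hd : a ∣ c*k := ⟨z, he2⟩
    have := Nat.le_of_dvd (by omega) (Nat.Coprime.dvd_of_dvd_mul_left hac hd)
    omega
  have d3 : a*(c*y) ≠ a*(b*z) := by
    intro he
    have he2 : c*y = b*z := Nat.eq_of_mul_eq_mul_left ha he
    have hd : b ∣ c*y := ⟨z, he2⟩
    have := Nat.le_of_dvd (by omega) (Nat.Coprime.dvd_of_dvd_mul_left hbc hd)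
    omega
  simp only [i1, i2, i3, i4, i5, i6]
  obtain ⟨α, hα⟩ : ∃ w, b*(c*k) = w := ⟨_, rfl⟩
  obtain ⟨β, hβ⟩ : ∃ w, a*(c*y) = w := ⟨_, rfl⟩
  obtain ⟨γ, hγ⟩ : ∃ w, a*(b*z) = w := ⟨_, rfl⟩
  rw [hα] at d1 d2 ⊢
  rw [hβ] at d1 d3 ⊢
  rw [hγ] at d2 d3 ⊢
  split_ifs <;> omega

lemma FSTAR (a b c : ℕ) (ha : 0 < a) (hb : 0 < b) (hc : 0 < c)
    (hab : Nat.Coprime a b) (hac : Nat.Coprime a c) (hbc : Nat.Coprime b c) :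
    Fc a b c + Fc b c a + Fc c a b = ((a:ℤ)-1)*((b:ℤ)-1)*((c:ℤ)-1) := by
  have e1 : Fc a b c = ∑ k ∈ Icc 1 (a-1), ∑ y ∈ Icc 1 (b-1), ∑ z ∈ Icc 1 (c-1),
      (ite (a*y < b*k) (1:ℤ) 0) * (ite (a*z < c*k) (1:ℤ) 0) := by
    rw [show Fc a b c = ∑ k ∈ Icc 1 (a-1), ((b*k/a:ℕ):ℤ)*((c*k/a:ℕ):ℤ) from
      sum_range_eq_Icc _ a ha (by simp)]
    refine Finset.sum_congr rfl fun k hk => ?_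
    rw [Finset.mem_Icc] at hk
    rw [floor_as_sum a b k ha hb hab.symm (by omega),
      floor_as_sum a c k ha hc hac.symm (by omega), Finset.sum_mul_sum]
  have e2 : Fc b c a = ∑ k ∈ Icc 1 (a-1), ∑ y ∈ Icc 1 (b-1), ∑ z ∈ Icc 1 (c-1),
      (ite (b*z < c*y) (1:ℤ) 0) * (ite (b*k < a*y) (1:ℤ) 0) := by
    have e2' : Fc b c a = ∑ y ∈ Icc 1 (b-1), ∑ z ∈ Icc 1 (c-1), ∑ k ∈ Icc 1 (a-1),
        (ite (b*z < c*y) (1:ℤ) 0) * (ite (b*k < a*y) (1:ℤ) 0) := by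
      rw [show Fc b c a = ∑ y ∈ Icc 1 (b-1), ((c*y/b:ℕ):ℤ)*((a*y/b:ℕ):ℤ) from
        sum_range_eq_Icc _ b hb (by simp)]
      refine Finset.sum_congr rfl fun y hy => ?_
      rw [Finset.mem_Icc] at hy
      rw [floor_as_sum b c y hb hc hbc.symm (by omega),
        floor_as_sum b a y hb ha hab (by omega), Finset.sum_mul_sum]
    rw [e2']
    rw [show (∑ y ∈ Icc 1 (b-1), ∑ z ∈ Icc 1 (c-1), ∑ k ∈ Icc 1 (a-1),
        (ite (b*z < c*y) (1:ℤ) 0) * (ite (b*k < a*y) (1:ℤ) 0))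
      = ∑ y ∈ Icc 1 (b-1), ∑ k ∈ Icc 1 (a-1), ∑ z ∈ Icc 1 (c-1),
        (ite (b*z < c*y) (1:ℤ) 0) * (ite (b*k < a*y) (1:ℤ) 0) from
      Finset.sum_congr rfl fun y _ => Finset.sum_comm]
    exact Finset.sum_comm
  have e3 : Fc c a b = ∑ k ∈ Icc 1 (a-1), ∑ y ∈ Icc 1 (b-1), ∑ z ∈ Icc 1 (c-1),
      (ite (c*k < a*z) (1:ℤ) 0) * (ite (c*y < b*z) (1:ℤ) 0) := by
    have e3' : Fc c a b = ∑ z ∈ Icc 1 (c-1), ∑ k ∈ Icc 1 (a-1), ∑ y ∈ Icc 1 (b-1),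
        (ite (c*k < a*z) (1:ℤ) 0) * (ite (c*y < b*z) (1:ℤ) 0) := by
      rw [show Fc c a b = ∑ z ∈ Icc 1 (c-1), ((a*z/c:ℕ):ℤ)*((b*z/c:ℕ):ℤ) from
        sum_range_eq_Icc _ c hc (by simp)]
      refine Finset.sum_congr rfl fun z hz => ?_
      rw [Finset.mem_Icc] at hz
      rw [floor_as_sum c a z hc ha hac (by omega),
        floor_as_sum c b z hc hb hbc (by omega), Finset.sum_mul_sum]
    rw [e3', Finset.sum_comm]
    exact Finset.sum_congr rfl fun k _ => Finset.sum_comm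
  rw [e1, e2, e3, ← Finset.sum_add_distrib, ← Finset.sum_add_distrib]
  have inner1 : ∀ k ∈ Icc 1 (a-1),
      ((∑ y ∈ Icc 1 (b-1), ∑ z ∈ Icc 1 (c-1),
        (ite (a*y < b*k) (1:ℤ) 0) * (ite (a*z < c*k) (1:ℤ) 0))
      + (∑ y ∈ Icc 1 (b-1), ∑ z ∈ Icc 1 (c-1),
        (ite (b*z < c*y) (1:ℤ) 0) * (ite (b*k < a*y) (1:ℤ) 0))
      + (∑ y ∈ Icc 1 (b-1), ∑ z ∈ Icc 1 (c-1),
        (ite (c*k < a*z) (1:ℤ) 0) * (ite (c*y < b*z) (1:ℤ) 0)))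
      = ((b:ℤ)-1)*((c:ℤ)-1) := by
    intro k hk
    rw [Finset.mem_Icc] at hk
    rw [← Finset.sum_add_distrib, ← Finset.sum_add_distrib]
    have inner2 : ∀ y ∈ Icc 1 (b-1),
        ((∑ z ∈ Icc 1 (c-1), (ite (a*y < b*k) (1:ℤ) 0) * (ite (a*z < c*k) (1:ℤ) 0))
        + (∑ z ∈ Icc 1 (c-1), (ite (b*z < c*y) (1:ℤ) 0) * (ite (b*k < a*y) (1:ℤ) 0))
        + (∑ z ∈ Icc 1 (c-1), (ite (c*k < a*z) (1:ℤ) 0) * (ite (c*y < b*z) (1:ℤ) 0)))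
        = ((c:ℤ)-1) := by
      intro y hy
      rw [Finset.mem_Icc] at hy
      rw [← Finset.sum_add_distrib, ← Finset.sum_add_distrib]
      have inner3 : ∀ z ∈ Icc 1 (c-1),
          ((ite (a*y < b*k) (1:ℤ) 0) * (ite (a*z < c*k) (1:ℤ) 0)
          + (ite (b*z < c*y) (1:ℤ) 0) * (ite (b*k < a*y) (1:ℤ) 0)
          + (ite (c*k < a*z) (1:ℤ) 0) * (ite (c*y < b*z) (1:ℤ) 0))
          = 1 := by
        intro z hz
        rw [Finset.mem_Icc] at hz
        rw [ite_prod, ite_prod, ite_prod]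
        exact exactly_one a b c k y z ha hb hc hab hac hbc hk.1 hk.2 hy.1 hy.2 hz.1 hz.2
      rw [Finset.sum_congr rfl inner3, Finset.sum_const, Nat.card_Icc, nsmul_eq_mul, mul_one]
      omega
    rw [Finset.sum_congr rfl inner2, Finset.sum_const, Nat.card_Icc, nsmul_eq_mul,
      show ((b-1+1-1 : ℕ):ℤ) = (b:ℤ)-1 by omega]
  rw [Finset.sum_congr rfl inner1, Finset.sum_const, Nat.card_Icc, nsmul_eq_mul,
    show ((a-1+1-1 : ℕ):ℤ) = (a:ℤ)-1 by omega]
  ring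

/- ### the three-term core identity -/

theorem core (a b c : ℕ) (ha : 0 < a) (hb : 0 < b) (hc : 0 < c)
    (hab : Nat.Coprime a b) (hac : Nat.Coprime a c) (hbc : Nat.Coprime b c) :
    12*(b:ℤ)^2*(c:ℤ)^2*(U a b c) + 12*(c:ℤ)^2*(a:ℤ)^2*(U b c a) + 12*(a:ℤ)^2*(b:ℤ)^2*(U c a b)
      = ((a:ℤ)^2+(b:ℤ)^2+(c:ℤ)^2)*a*b*c - 3*(a:ℤ)^2*b^2*c^2
        + 3*((a:ℤ)+b+c-3)*(a:ℤ)^2*b^2*c^2 := by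
  have EXPa := EXP a b c
  have EXPb := EXP b c a
  have EXPc := EXP c a b
  have R1ca := R1 c a hac.symm
  have R1ba := R1 b a hab.symm
  have R1cb := R1 c b hbc.symm
  have CRca := CROSS c a (by omega) ha hac.symm
  have CRba := CROSS b a (by omega) ha hab.symm
  have CRcb := CROSS c b (by omega) hb hbc.symm
  have FST := FSTAR a b c ha hb hc hab hac hbc
  have BVac := Bval a c ha hc hac
  have BVab := Bval a b ha hb hab
  have BVbc := Bval b c hb hc hbc
  have P6a := P6 a
  have P6b := P6 b
  have P6c := P6 c
  linear_combination (12*(b:ℤ)^2*c^2) * EXPa + (12*(c:ℤ)^2*a^2) * EXPb + (12*(a:ℤ)^2*b^2) * EXPc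
    - (6*(b:ℤ)^3*c) * R1ca - (6*(a:ℤ)^2*b^3*c) * CRca
    - (6*(b:ℤ)*c^3) * R1ba - (6*(a:ℤ)^2*b*c^3) * CRba
    - (6*(a:ℤ)^3*c) * R1cb - (6*(a:ℤ)^3*b^2*c) * CRcb
    + (12*(a:ℤ)^2*b^2*c^2) * FST
    - (3*(a:ℤ)^2*b^3*c) * BVac - (3*(a:ℤ)^2*b*c^3) * BVab - (3*(a:ℤ)^3*b^2*c) * BVbc
    + ((b:ℤ)*c*(b^2+c^2)) * P6a + ((a:ℤ)^3*c*(c^2+1)) * P6b + (2*(a:ℤ)^3*b^3) * P6c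

/- ### Dedekind sum in terms of U -/

theorem DEDSUM (v u w : ℕ) (hv : 0 < v) (hu : Nat.Coprime u v) (hw : Nat.Coprime w v)
    (iw : ℤ) (hiw : (w:ℤ) * iw ≡ 1 [ZMOD (v:ℤ)]) :
    (v:ℝ)^2 * (12 * dedekindSum ((u:ℤ) * iw) v)
      = 12 * ((U v u w : ℤ) : ℝ) - 3*(v:ℝ)^2*((v:ℝ)-1) := by
  have hvR : (v:ℝ) ≠ 0 := Nat.cast_ne_zero.mpr (by omega)
  obtain ⟨m₀, hm₀⟩ : ∃ m₀ : ℤ, (w:ℤ) * iw = 1 + (v:ℤ) * m₀ := by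
    obtain ⟨d, hd⟩ := hiw.dvd
    exact ⟨-d, by linear_combination -hd⟩
  set G : ℕ → ℝ := fun k => saw ((k:ℝ)/(v:ℝ)) * saw ((((u:ℤ)*iw : ℤ):ℝ) * (k:ℝ) / (v:ℝ))
    with hG
  have hsaw0 : saw 0 = 0 := by simp [saw]
  have hG0 : G 0 = 0 := by
    simp only [hG, Nat.cast_zero, zero_div, mul_zero, hsaw0, zero_mul]
  have hins : Finset.Icc 1 v = insert v (Finset.Icc 1 (v-1)) := by
    ext x
    simp only [Finset.mem_insert, Finset.mem_Icc]
    omega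
  have hnm : v ∉ Finset.Icc 1 (v-1) := by
    simp only [Finset.mem_Icc]
    omega
  have hsum : dedekindSum ((u:ℤ)*iw) v = ∑ k ∈ Icc 1 (v-1), G (w*k % v) := by
    rw [dedekindSum, hins, Finset.sum_insert hnm]
    have htop : saw ((v:ℝ)/(v:ℝ)) * saw ((((u:ℤ)*iw : ℤ):ℝ) * (v:ℝ) / (v:ℝ)) = 0 := by
      rw [show (v:ℝ)/(v:ℝ) = ((1:ℤ):ℝ) by rw [div_self hvR]; norm_num, saw_intCast, zero_mul]
    rw [htop, zero_add]
    have hGw0 : G (w*0 % v) = 0 := by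
      rw [show w*0 % v = 0 by simp]
      exact hG0
    rw [← sum_range_eq_Icc G v hv hG0, ← perm_sum G w v hw,
      sum_range_eq_Icc (fun k => G (w*k % v)) v hv hGw0]
  have key : ∀ k ∈ Icc 1 (v-1), G (w*k % v)
      = (((w*k % v : ℕ):ℝ)/(v:ℝ) - 1/2) * (((u*k % v : ℕ):ℝ)/(v:ℝ) - 1/2) := by
    intro k hk
    rw [Finset.mem_Icc] at hk
    obtain ⟨hk1, hk2⟩ := hk
    have hk2' : k < v := by omega
    -- first factor
    have hNw : 0 < w*k % v := by
      rcases Nat.eq_zero_or_pos (w*k % v) with h0 | h0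
      · exfalso
        exact nodvd w v k hw hk1 hk2' (Int.ofNat_dvd.mpr (Nat.dvd_of_mod_eq_zero h0))
      · exact h0
    have hNwlt : w*k % v < v := Nat.mod_lt _ (by omega)
    have hNu : 0 < u*k % v := by
      rcases Nat.eq_zero_or_pos (u*k % v) with h0 | h0
      · exfalso
        exact nodvd u v k hu hk1 hk2' (Int.ofNat_dvd.mpr (Nat.dvd_of_mod_eq_zero h0))
      · exact h0
    have f1 : saw (((w*k % v : ℕ):ℝ)/(v:ℝ)) = ((w*k % v : ℕ):ℝ)/(v:ℝ) - 1/2 := by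
      have hnd : ¬ ((v:ℤ) ∣ ((w*k % v : ℕ):ℤ)) := by
        intro hd
        have := Int.le_of_dvd (by exact_mod_cast hNw) hd
        omega
      have := saw_rat ((w*k % v : ℕ):ℤ) v hv hnd
      rw [Int.emod_eq_of_lt (by positivity) (by exact_mod_cast hNwlt)] at this
      push_cast at this ⊢
      exact this
    -- second factor
    have f2 : saw ((((u:ℤ)*iw : ℤ):ℝ) * ((w*k % v : ℕ):ℝ) / (v:ℝ))
        = ((u*k % v : ℕ):ℝ)/(v:ℝ) - 1/2 := by
      set q : ℤ := ((w*k/v : ℕ) : ℤ) with hq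
      have hmodexp : ((w*k % v : ℕ):ℤ) = ((w*k : ℕ):ℤ) - (v:ℤ)*q := mod_expand (w*k) v
      have harg : (((u:ℤ)*iw : ℤ):ℝ) * ((w*k % v : ℕ):ℝ) / (v:ℝ)
          = ((((u:ℤ)*iw*(w:ℤ)*(k:ℤ)) : ℤ):ℝ)/(v:ℝ) - (((u:ℤ)*iw*q : ℤ):ℝ) := by
        have hcast : ((w*k % v : ℕ):ℝ) = ((w*k : ℕ):ℝ) - (v:ℝ)*((q:ℤ):ℝ) := by
          rw [show ((w*k % v : ℕ):ℝ) = (((w*k % v : ℕ):ℤ):ℝ) by norm_cast, hmodexp]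
          push_cast
          try ring
        rw [hcast]
        push_cast
        try field_simp
        try ring
      rw [harg, saw_sub_int]
      have hMeq : ((u:ℤ)*iw*(w:ℤ)*(k:ℤ)) = ((u*k : ℕ):ℤ) + (v:ℤ)*((u:ℤ)*m₀*(k:ℤ)) := by
        push_cast
        linear_combination (u:ℤ)*(k:ℤ)*hm₀
      have harg2 : ((((u:ℤ)*iw*(w:ℤ)*(k:ℤ)) : ℤ):ℝ)/(v:ℝ)
          = ((u*k : ℕ):ℝ)/(v:ℝ) + (((u:ℤ)*m₀*(k:ℤ) : ℤ):ℝ) := by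
        rw [hMeq]
        push_cast
        try field_simp
        try ring
      rw [harg2, saw_add_int]
      have := saw_rat ((u*k : ℕ):ℤ) v hv (nodvd u v k hu hk1 hk2')
      rw [show ((u*k : ℕ):ℤ) % (v:ℤ) = ((u*k % v : ℕ):ℤ) from (Int.natCast_mod _ _).symm] at this
      push_cast at this ⊢
      exact this
    simp only [hG]
    rw [f1, f2]
  have hsum2 : dedekindSum ((u:ℤ)*iw) v
      = ∑ k ∈ Icc 1 (v-1), (((w*k % v : ℕ):ℝ)/(v:ℝ) - 1/2) * (((u*k % v : ℕ):ℝ)/(v:ℝ) - 1/2) := by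
    rw [hsum]
    exact Finset.sum_congr rfl key
  -- expansion
  have expd : ∀ k ∈ Icc 1 (v-1),
      (v:ℝ)^2 * ((((w*k % v : ℕ):ℝ)/(v:ℝ) - 1/2) * (((u*k % v : ℕ):ℝ)/(v:ℝ) - 1/2))
      = ((w*k % v : ℕ):ℝ)*((u*k % v : ℕ):ℝ) - ((v:ℝ)/2)*((w*k % v : ℕ):ℝ)
        - ((v:ℝ)/2)*((u*k % v : ℕ):ℝ) + (v:ℝ)^2/4 := by
    intro k _
    field_simp
    ring
  have hUc : ((U v w u : ℤ):ℝ) = ∑ k ∈ Icc 1 (v-1), ((w*k % v : ℕ):ℝ)*((u*k % v : ℕ):ℝ) := by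
    rw [U, ← sum_range_eq_Icc (fun k => ((w*k % v : ℕ):ℝ)*((u*k % v : ℕ):ℝ)) v hv (by simp),
      Int.cast_sum]
    exact Finset.sum_congr rfl fun k _ => by norm_cast
  have hQw : ((Q v : ℤ):ℝ) = ∑ k ∈ Icc 1 (v-1), ((w*k % v : ℕ):ℝ) := by
    rw [← perm_lin w v hw, ← sum_range_eq_Icc (fun k => ((w*k % v : ℕ):ℝ)) v hv (by simp),
      Int.cast_sum]
    exact Finset.sum_congr rfl fun k _ => by norm_cast
  have hQu : ((Q v : ℤ):ℝ) = ∑ k ∈ Icc 1 (v-1), ((u*k % v : ℕ):ℝ) := by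
    rw [← perm_lin u v hu, ← sum_range_eq_Icc (fun k => ((u*k % v : ℕ):ℝ)) v hv (by simp),
      Int.cast_sum]
    exact Finset.sum_congr rfl fun k _ => by norm_cast
  have hQval : 2 * ((Q v : ℤ):ℝ) = (v:ℝ)^2 - (v:ℝ) := by
    exact_mod_cast congrArg (fun z : ℤ => (z:ℝ)) (Qval v)
  have hcard : ((Finset.Icc 1 (v-1)).card : ℝ) = (v:ℝ) - 1 := by
    rw [Nat.card_Icc]
    push_cast [Nat.cast_sub (show 1 ≤ v by omega)]
    ring
  have main : (v:ℝ)^2 * dedekindSum ((u:ℤ)*iw) v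
      = ((U v w u : ℤ):ℝ) - ((v:ℝ)/2)*((Q v : ℤ):ℝ) - ((v:ℝ)/2)*((Q v : ℤ):ℝ)
        + ((v:ℝ) - 1)*((v:ℝ)^2/4) := by
    rw [hsum2, Finset.mul_sum, Finset.sum_congr rfl expd]
    rw [Finset.sum_add_distrib, Finset.sum_sub_distrib, Finset.sum_sub_distrib,
      ← Finset.mul_sum, ← Finset.mul_sum, Finset.sum_const, nsmul_eq_mul, hcard,
      ← hUc, ← hQw, ← hQu]
  have hUcomm : ((U v u w : ℤ):ℝ) = ((U v w u : ℤ):ℝ) := by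
    rw [U_comm]
  rw [hUcomm]
  linear_combination 12 * main - 6*(v:ℝ)*hQval

end DedAux

theorem stmt_4 (a b t : ℕ) (ha : 0 < a) (hb : 0 < b) (ht : 0 < t)
    (hab : Nat.Coprime a b) (htdvd : t ∣ a ^ 2 + 1) (hbt : Nat.Coprime b t)
    (astar bstar : ℤ)
    (hastar : (a : ℤ) * astar ≡ 1 [ZMOD (b : ℤ)])
    (hbstar : (b : ℤ) * bstar ≡ 1 [ZMOD (a : ℤ)])
    (hbmod : (b : ℤ) ≡ (a : ℤ) [ZMOD (t : ℤ)]) :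
    S ((t : ℤ) * astar) b + S ((t : ℤ) * bstar) a =
      ((a : ℝ) ^ 2 + (b : ℝ) ^ 2 + (t : ℝ) ^ 2) / ((t : ℝ) * a * b)
        - (t : ℝ) - 2 / (t : ℝ) := by
  have hta : Nat.Coprime t a := by
    have h2 : Nat.gcd t a ∣ a := Nat.gcd_dvd_right _ _
    have h3 : Nat.gcd t a ∣ a^2 + 1 := dvd_trans (Nat.gcd_dvd_left _ _) htdvd
    have h4 : Nat.gcd t a ∣ a^2 := dvd_pow h2 (by norm_num)
    have h5 : Nat.gcd t a ∣ 1 := by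
      have := Nat.dvd_sub h3 h4
      rwa [show a^2 + 1 - a^2 = 1 by omega] at this
    exact Nat.dvd_one.mp h5
  have htb : Nat.Coprime t b := hbt.symm
  have h1 := DedAux.DEDSUM b t a hb htb hab astar hastar
  have h2 := DedAux.DEDSUM a t b ha hta hab.symm bstar hbstar
  have hcore := DedAux.core a t b ha ht hb hta.symm hab htb
  have hUt : DedAux.U t b a = DedAux.P t := by
    have hmodn : b % t = a % t := by
      have hInt : (b:ℤ) % (t:ℤ) = (a:ℤ) % (t:ℤ) := hbmod
      have : ((b % t : ℕ):ℤ) = ((a % t : ℕ):ℤ) := by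
        rw [Int.natCast_mod, Int.natCast_mod, hInt]
      exact_mod_cast this
    have hmod : ∀ k, b*k % t = a*k % t := by
      intro k
      rw [Nat.mul_mod, hmodn, ← Nat.mul_mod]
    rw [DedAux.U]
    calc ∑ k ∈ Finset.range t, ((b*k % t : ℕ):ℤ)*((a*k % t : ℕ):ℤ)
        = ∑ k ∈ Finset.range t, ((a*k % t : ℕ):ℤ)^2 := by
          refine Finset.sum_congr rfl fun k _ => ?_
          rw [hmod k]
          ring
    _ = DedAux.P t := DedAux.perm_sq a t hta.symm
  have hcomm : DedAux.U b a t = DedAux.U b t a := DedAux.U_comm b a t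
  have hP6 := DedAux.P6 t
  -- cast everything to ℝ
  have hcoreR := congrArg (fun z : ℤ => (z:ℝ)) hcore
  have hUtR := congrArg (fun z : ℤ => (z:ℝ)) hUt
  have hcommR := congrArg (fun z : ℤ => (z:ℝ)) hcomm
  have hP6R := congrArg (fun z : ℤ => (z:ℝ)) hP6
  push_cast at hcoreR hP6R
  have haR : (a:ℝ) ≠ 0 := Nat.cast_ne_zero.mpr (by omega)
  have hbR : (b:ℝ) ≠ 0 := Nat.cast_ne_zero.mpr (by omega)
  have htR : (t:ℝ) ≠ 0 := Nat.cast_ne_zero.mpr (by omega)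
  have KEY : (a:ℝ)^2*(b:ℝ)^2*(t:ℝ)^2 *
      (12 * dedekindSum ((t:ℤ)*astar) b + 12 * dedekindSum ((t:ℤ)*bstar) a)
      = ((a:ℝ)^2+(b:ℝ)^2+(t:ℝ)^2)*(a:ℝ)*(b:ℝ)*(t:ℝ) - (a:ℝ)^2*(b:ℝ)^2*(t:ℝ)^3
        - 2*(a:ℝ)^2*(b:ℝ)^2*(t:ℝ) := by
    linear_combination ((a:ℝ)^2*(t:ℝ)^2) * h1 + ((b:ℝ)^2*(t:ℝ)^2) * h2 + hcoreR
      - (12*(a:ℝ)^2*(t:ℝ)^2) * hcommR - (12*(a:ℝ)^2*(b:ℝ)^2) * hUtR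
      - (2*(a:ℝ)^2*(b:ℝ)^2) * hP6R
  have expand : ((a : ℝ) ^ 2 + (b : ℝ) ^ 2 + (t : ℝ) ^ 2) / ((t : ℝ) * a * b)
        - (t : ℝ) - 2 / (t : ℝ)
      = (((a:ℝ)^2+(b:ℝ)^2+(t:ℝ)^2)*(a:ℝ)*(b:ℝ)*(t:ℝ) - (a:ℝ)^2*(b:ℝ)^2*(t:ℝ)^3
        - 2*(a:ℝ)^2*(b:ℝ)^2*(t:ℝ)) / ((a:ℝ)^2*(b:ℝ)^2*(t:ℝ)^2) := by
    field_simp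
  show 12 * dedekindSum ((t:ℤ)*astar) b + 12 * dedekindSum ((t:ℤ)*bstar) a = _
  rw [expand, eq_div_iff (by positivity)]
  linear_combination KEY
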